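/- Let τ > 0, η > 0, β > 0, let I_1,…,I_N > 0 with T = ∑_{j=1}^N I_j, and consider the simplified RDN system τ·dR_i/dt = −R_i + (β·R_i + I_i)/(η + G), τ·dG/dt = −G + ∑_{j=1}^N R_j with Jacobian J at its unique positive-G equilibrium (R*, G*), where G* = ((β − η) + √((η − β)² + 4T))/2 and R_i* = I_i/(η − β + G*). Then J is the arrowhead matrix [[a·I_N, b], [cᵀ, −1/τ]] with a = (−1 + β/(η + G*))/τ, b_i = −R_i*/(τ(η + G*)), c_j = 1/τ, and its characteristic polynomial equals χ_J(X) = (X − a)^{N−1} · ( (X − a)(X + 1/τ) + G*/(τ²(η + G*)) ). -/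

import Mathlib

/-!
At an equilibrium, `β R_i + I_i = R_i (η + G)` turns the `∂/∂G` entries of the Jacobian into
`-R_i / (τ (η + G))`, while the `R`-block is the scalar matrix `a • 1`; so `J` is an arrowhead
matrix. For `t ≠ a` the Schur complement of the block `(t - a) • 1` of `t • 1 - J` gives
`det (t • 1 - J) = (t - a)^N ((t - d) - (t - a)⁻¹ ∑ b_i c_i)`, and two polynomials agreeing off a
point are equal. Finally `∑ b_i c_i = -G / (τ² (η + G))` because `∑ R_i = G`.
-/

open Polynomial

/-- The vector field of the simplified RDN system with inputs on
`(R_1, …, R_N, G)`: `dR_i/dt = (-R_i + (β R_i + I_i)/(η + G))/τ`,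
`dG/dt = (-G + ∑_j R_j)/τ`. -/
noncomputable def rdnFieldI (N : ℕ) (τ β η : ℝ) (I : Fin N → ℝ)
    (x : (Fin N ⊕ Unit) → ℝ) : (Fin N ⊕ Unit) → ℝ :=
  fun i => match i with
  | Sum.inl i =>
      (-x (Sum.inl i) + (β * x (Sum.inl i) + I i) / (η + x (Sum.inr ()))) / τ
  | Sum.inr _ => (-x (Sum.inr ()) + ∑ j, x (Sum.inl j)) / τ

/-- The Jacobian matrix of `F` at `p`: the matrix of partial derivatives of
the components of `F` with respect to the coordinates. -/
noncomputable def jacobian {n : Type*} [Fintype n] [DecidableEq n]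
    (F : (n → ℝ) → n → ℝ) (p : n → ℝ) : Matrix n n ℝ :=
  Matrix.of fun i j => fderiv ℝ (fun x => F x i) p (Pi.single j 1)

/-- The `(N+1) × (N+1)` arrowhead matrix with upper-left block `a • I_N`,
last column `b`, last row `cᵀ`, and bottom-right entry `d`. -/
def arrowhead (N : ℕ) (a d : ℝ) (b c : Fin N → ℝ) :
    Matrix (Fin N ⊕ Unit) (Fin N ⊕ Unit) ℝ :=
  Matrix.of fun i j =>
    match i, j with
    | Sum.inl i, Sum.inl j => if i = j then a else 0
    | Sum.inl i, Sum.inr _ => b i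
    | Sum.inr _, Sum.inl j => c j
    | Sum.inr _, Sum.inr _ => d

lemma arrowhead_eq_fromBlocks (N : ℕ) (a d : ℝ) (b c : Fin N → ℝ) :
    arrowhead N a d b c =
      Matrix.fromBlocks (a • 1) (Matrix.replicateCol Unit b) (Matrix.replicateRow Unit c)
        (Matrix.of fun _ _ => d) := by
  ext (i | i) (j | j) <;> simp [arrowhead, Matrix.one_apply]

lemma det_arrowhead {N : ℕ} {a : ℝ} (ha : a ≠ 0) (d : ℝ) (b c : Fin N → ℝ) :
    (arrowhead N a d b c).det = a ^ N * (d - a⁻¹ * ∑ j, b j * c j) := by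
  let _ : Invertible (a • 1 : Matrix (Fin N) (Fin N) ℝ) :=
    ⟨a⁻¹ • 1, by simp [smul_smul, ha], by simp [smul_smul, ha]⟩
  rw [arrowhead_eq_fromBlocks, Matrix.det_fromBlocks₁₁,
    show ⅟(a • 1 : Matrix (Fin N) (Fin N) ℝ) = a⁻¹ • 1 from rfl, Matrix.det_smul, Matrix.det_one,
    Fintype.card_fin, mul_one, Matrix.det_unique]
  simp [Matrix.mul_apply, Finset.mul_sum, mul_comm]

lemma scalar_sub_arrowhead (N : ℕ) (a d : ℝ) (b c : Fin N → ℝ) (t : ℝ) :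
    Matrix.scalar _ t - arrowhead N a d b c = arrowhead N (t - a) (t - d) (-b) (-c) := by
  ext (i | i) (j | j)
  · by_cases hij : i = j <;> simp [arrowhead, hij]
  all_goals simp [arrowhead]

lemma charpoly_arrowhead {N : ℕ} (hN : 1 ≤ N) (a d : ℝ) (b c : Fin N → ℝ) :
    (arrowhead N a d b c).charpoly =
      (X - C a) ^ (N - 1) * ((X - C a) * (X - C d) - C (∑ j, b j * c j)) := by
  refine Polynomial.eq_of_infinite_eval_eq _ _ ((Set.finite_singleton a).infinite_compl.mono ?_)
  intro t (ht : t ≠ a)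
  obtain ⟨n, rfl⟩ := Nat.exists_eq_add_of_le' hN
  have hta : t - a ≠ 0 := sub_ne_zero.2 ht
  rw [Set.mem_ofPred_eq, Matrix.eval_charpoly, scalar_sub_arrowhead, det_arrowhead hta]
  simp only [eval_mul, eval_pow, eval_sub, eval_X, eval_C, Pi.neg_apply, neg_mul_neg,
    Nat.add_sub_cancel]
  field_simp
  ring

lemma jacobian_apply_of_hasFDerivAt {ι : Type*} [Fintype ι] [DecidableEq ι]
    {F : (ι → ℝ) → ι → ℝ} {p : ι → ℝ} {i : ι} {L : (ι → ℝ) →L[ℝ] ℝ}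
    (h : HasFDerivAt (fun x => F x i) L p) (j : ι) :
    jacobian F p i j = L (Pi.single j 1) := by
  rw [jacobian, Matrix.of_apply, h.fderiv]

open ContinuousLinearMap in
lemma hasFDerivAt_rdnFieldI_inl (N : ℕ) (τ β η : ℝ) (I : Fin N → ℝ) {p : Fin N ⊕ Unit → ℝ}
    (hp : η + p (Sum.inr ()) ≠ 0) (i : Fin N) :
    HasFDerivAt (fun x => rdnFieldI N τ β η I x (Sum.inl i))
      (((-1 + β / (η + p (Sum.inr ()))) / τ) • proj (R := ℝ) (Sum.inl i) -
        ((β * p (Sum.inl i) + I i) / (τ * (η + p (Sum.inr ())) ^ 2)) •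
          proj (R := ℝ) (Sum.inr ())) p := by
  have hinv := (hasDerivAt_inv hp).comp_hasFDerivAt p
    ((hasFDerivAt_apply (𝕜 := ℝ) (Sum.inr ()) p).const_add η)
  have hnum := ((hasFDerivAt_apply (𝕜 := ℝ) (Sum.inl i) p).const_mul β).add_const (I i)
  have h := ((hasFDerivAt_apply (𝕜 := ℝ) (Sum.inl i) p).neg.add (hnum.mul hinv)).mul_const τ⁻¹
  refine (h.congr_fderiv ?_).congr_of_eventuallyEq (.of_forall fun x => ?_)
  · ext k
    simp only [smul_add, smul_neg, add_apply, neg_apply, smul_apply, proj_apply, smul_eq_mul,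
      sub_apply, Function.comp_apply]
    field_simp
    ring
  · simp [rdnFieldI, div_eq_mul_inv]

open ContinuousLinearMap in
lemma hasFDerivAt_rdnFieldI_inr (N : ℕ) (τ β η : ℝ) (I : Fin N → ℝ) (p : Fin N ⊕ Unit → ℝ) :
    HasFDerivAt (fun x => rdnFieldI N τ β η I x (Sum.inr ()))
      ((1 / τ) • ∑ j, proj (R := ℝ) (Sum.inl j) - (1 / τ) • proj (R := ℝ) (Sum.inr ())) p := by
  have h := ((hasFDerivAt_apply (𝕜 := ℝ) (Sum.inr ()) p).neg.add
      (HasFDerivAt.fun_sum (u := Finset.univ) fun j _ =>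
        hasFDerivAt_apply (𝕜 := ℝ) (Sum.inl j) p)).mul_const τ⁻¹
  refine (h.congr_fderiv ?_).congr_of_eventuallyEq (.of_forall fun x => ?_)
  · ext k
    simp only [smul_add, smul_neg, add_apply, neg_apply, smul_apply, proj_apply, smul_eq_mul,
      sum_apply, sub_apply]
    ring
  · simp [rdnFieldI, div_eq_mul_inv]

lemma jacobian_rdnFieldI (N : ℕ) (τ β η : ℝ) (I : Fin N → ℝ) {p : Fin N ⊕ Unit → ℝ}
    (hp : η + p (Sum.inr ()) ≠ 0) :
    jacobian (rdnFieldI N τ β η I) p =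
      arrowhead N ((-1 + β / (η + p (Sum.inr ()))) / τ) (-1 / τ)
        (fun i => -(β * p (Sum.inl i) + I i) / (τ * (η + p (Sum.inr ())) ^ 2))
        (fun _ => 1 / τ) := by
  ext (i | i) (j | j) <;>
    simp [jacobian_apply_of_hasFDerivAt (hasFDerivAt_rdnFieldI_inl N τ β η I hp _),
      jacobian_apply_of_hasFDerivAt (hasFDerivAt_rdnFieldI_inr N τ β η I p), arrowhead,
      Pi.single_apply, neg_div, -neg_add_rev]

/-- `G*`: the positive root of `G (η - β + G) = T`, which is `∑ R_i* = G*` for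
`R_i* = I_i / (η - β + G*)`. -/
noncomputable def equilibriumPool (β η T : ℝ) : ℝ :=
  ((β - η) + √((η - β) ^ 2 + 4 * T)) / 2

section EquilibriumPool

variable {β η T : ℝ}

lemma equilibriumPool_mul_sub_add (hT : 0 ≤ T) :
    equilibriumPool β η T * (η - β + equilibriumPool β η T) = T := by
  have hs := Real.sq_sqrt (by positivity : 0 ≤ (η - β) ^ 2 + 4 * T)
  rw [equilibriumPool]
  linear_combination hs / 4

lemma equilibriumPool_pos (hT : 0 < T) : 0 < equilibriumPool β η T := by
  have : η - β < √((η - β) ^ 2 + 4 * T) := Real.lt_sqrt_of_sq_lt (by linarith)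
  rw [equilibriumPool]
  linarith

lemma sub_add_equilibriumPool_pos (hT : 0 < T) : 0 < η - β + equilibriumPool β η T := by
  have : β - η < √((η - β) ^ 2 + 4 * T) := Real.lt_sqrt_of_sq_lt (by nlinarith)
  rw [equilibriumPool]
  linarith

end EquilibriumPool

lemma sum_eq_of_eq_div_of_mul_eq {N : ℕ} {I R : Fin N → ℝ} {G d : ℝ} (hd : d ≠ 0)
    (hR : ∀ i, R i = I i / d) (hG : G * d = ∑ j, I j) : ∑ j, R j = G := by
  rw [Finset.sum_congr rfl fun j _ => hR j, ← Finset.sum_div, ← hG, mul_div_cancel_right₀ _ hd]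

lemma jacobian_rdnFieldI_sumElim {N : ℕ} {τ β η G : ℝ} {I R : Fin N → ℝ} (hηG : η + G ≠ 0)
    (hR : ∀ i, β * R i + I i = R i * (η + G)) :
    jacobian (rdnFieldI N τ β η I) (Sum.elim R fun _ => G) =
      arrowhead N ((-1 + β / (η + G)) / τ) (-1 / τ) (fun i => -R i / (τ * (η + G)))
        (fun _ => 1 / τ) := by
  rw [jacobian_rdnFieldI N τ β η I hηG]
  congr 1
  funext i
  simp only [Sum.elim_inl, Sum.elim_inr, hR i]
  field_simp

lemma charpoly_arrowhead_of_sum_eq {N : ℕ} (hN : 1 ≤ N) (a τ η G : ℝ) {R : Fin N → ℝ}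
    (hR : ∑ j, R j = G) :
    (arrowhead N a (-1 / τ) (fun i => -R i / (τ * (η + G))) (fun _ => 1 / τ)).charpoly =
      (X - C a) ^ (N - 1) * ((X - C a) * (X + C (1 / τ)) + C (G / (τ ^ 2 * (η + G)))) := by
  have hsum : ∑ j, -R j / (τ * (η + G)) * (1 / τ) = -(G / (τ ^ 2 * (η + G))) := by
    rw [← Finset.sum_mul, ← Finset.sum_div, Finset.sum_neg_distrib, hR, div_mul_div_comm, mul_one,
      mul_right_comm, ← sq, neg_div]
  rw [charpoly_arrowhead hN, hsum, neg_div, map_neg, map_neg, sub_neg_eq_add, sub_neg_eq_add]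

theorem rdn_jacobian_arrowhead_charpoly_general (N : ℕ) (hN : 1 ≤ N) (τ β η : ℝ)
    (I : Fin N → ℝ) (hη : 0 < η)
    (hI : ∀ i, 0 < I i)
    (G : ℝ) (R : Fin N → ℝ)
    (hG : G = ((β - η) + Real.sqrt ((η - β) ^ 2 + 4 * ∑ j, I j)) / 2)
    (hR : ∀ i, R i = I i / (η - β + G))
    (p : (Fin N ⊕ Unit) → ℝ)
    (hp : p = Sum.elim R (fun _ => G)) :
    jacobian (rdnFieldI N τ β η I) p =
        arrowhead N ((-1 + β / (η + G)) / τ) (-1 / τ)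
          (fun i => -R i / (τ * (η + G))) (fun _ => 1 / τ) ∧
      (jacobian (rdnFieldI N τ β η I) p).charpoly =
        (X - C ((-1 + β / (η + G)) / τ)) ^ (N - 1) *
          ((X - C ((-1 + β / (η + G)) / τ)) * (X + C (1 / τ)) +
            C (G / (τ ^ 2 * (η + G)))) := by
  have hT : 0 < ∑ j, I j :=
    Finset.sum_pos (fun i _ => hI i) (Finset.univ_nonempty_iff.2 (Fin.pos_iff_nonempty.1 hN))
  replace hG : G = equilibriumPool β η (∑ j, I j) := hG
  have hd : η - β + G ≠ 0 := (hG ▸ sub_add_equilibriumPool_pos hT).ne'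
  have hηG : η + G ≠ 0 := (add_pos hη (hG ▸ equilibriumPool_pos hT)).ne'
  have hsum : ∑ j, R j = G :=
    sum_eq_of_eq_div_of_mul_eq hd hR (hG ▸ equilibriumPool_mul_sub_add hT.le)
  have hfix (i : Fin N) : β * R i + I i = R i * (η + G) := by
    rw [hR i]
    field_simp
    ring
  have hJ : jacobian (rdnFieldI N τ β η I) p = _ := hp ▸ jacobian_rdnFieldI_sumElim hηG hfix
  exact ⟨hJ, hJ ▸ charpoly_arrowhead_of_sum_eq hN _ τ η G hsum⟩

/-- At the unique positive-`G` equilibrium of the simplified RDN system with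
positive inputs, the Jacobian is the arrowhead matrix
`[[a I_N, b], [cᵀ, -1/τ]]` with `a = (-1 + β/(η + G*))/τ`,
`b_i = -R_i*/(τ(η + G*))`, `c_j = 1/τ`, and its characteristic polynomial is
`(X - a)^(N-1) ((X - a)(X + 1/τ) + G*/(τ²(η + G*)))`. -/
theorem rdn_jacobian_arrowhead_charpoly (N : ℕ) (hN : 1 ≤ N) (τ β η : ℝ)
    (I : Fin N → ℝ) (hτ : 0 < τ) (hη : 0 < η) (hβ : 0 < β)
    (hI : ∀ i, 0 < I i)
    (G : ℝ) (R : Fin N → ℝ)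
    (hG : G = ((β - η) + Real.sqrt ((η - β) ^ 2 + 4 * ∑ j, I j)) / 2)
    (hR : ∀ i, R i = I i / (η - β + G))
    (p : (Fin N ⊕ Unit) → ℝ)
    (hp : p = Sum.elim R (fun _ => G)) :
    jacobian (rdnFieldI N τ β η I) p =
        arrowhead N ((-1 + β / (η + G)) / τ) (-1 / τ)
          (fun i => -R i / (τ * (η + G))) (fun _ => 1 / τ) ∧
      (jacobian (rdnFieldI N τ β η I) p).charpoly =
        (X - C ((-1 + β / (η + G)) / τ)) ^ (N - 1) *
          ((X - C ((-1 + β / (η + G)) / τ)) * (X + C (1 / τ)) +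
            C (G / (τ ^ 2 * (η + G)))) :=
  rdn_jacobian_arrowhead_charpoly_general N hN τ β η I hη hI G R hG hR p hp
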